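/- arXiv:2512.18972 — 3 statements merged into one kernel-verified Lean document; each statement's English description precedes it below -/
import Mathlib

section
/- Fix σ, μ, δ with σ + μ = 1, 0 < σ + δ < 1 and 0 < μ − δ. Then the vector π = (1/Z)·((μ−δ)², (μ−δ)(σ+δ), (σ+δ)²) with Z = (μ−δ)² + (μ−δ)(σ+δ) + (σ+δ)² is a stationary distribution of the cooperation-driven matrix P with rows (μ−δ, σ+δ, 0), (μ−δ, 1−(μ+σ), σ+δ), (0, μ−δ, σ+δ): that is, π is a probability vector and π P = π. -/
/-- the explicit stationary distribution of the cooperation-driven matrix P. -/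
theorem stmt_6 (σ μ δ : ℝ) (hsum : σ + μ = 1) (hb0 : 0 < σ + δ) (hb1 : σ + δ < 1)
    (ha : 0 < μ - δ) :
    let P : Matrix (Fin 3) (Fin 3) ℝ :=
      !![μ - δ, σ + δ, 0; μ - δ, 1 - (μ + σ), σ + δ; 0, μ - δ, σ + δ]
    let Z : ℝ := (μ - δ)^2 + (μ - δ) * (σ + δ) + (σ + δ)^2
    let π : Fin 3 → ℝ := ![(μ - δ)^2 / Z, (μ - δ) * (σ + δ) / Z, (σ + δ)^2 / Z]
    (∀ i, 0 ≤ π i) ∧ (∑ i, π i = 1) ∧ (∀ j, ∑ i, π i * P i j = π j) := by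
  intro P Z π
  have hZ : 0 < Z := by
    have := mul_pos ha hb0
    positivity
  have hZ' : Z ≠ 0 := ne_of_gt hZ
  refine ⟨?_, ?_, ?_⟩
  · intro i
    fin_cases i <;> simp [π] <;> positivity
  · rw [Fin.sum_univ_three]
    simp only [π, Matrix.cons_val_zero, Matrix.cons_val_one, Matrix.head_cons,
      Matrix.cons_val_two, Matrix.tail_cons]
    field_simp [Z]
    simp only [Z]
    ring
  · intro j
    fin_cases j <;>
    · rw [Fin.sum_univ_three]
      simp only [π, P, Z, Fin.reduceFinMk, Matrix.cons_val_zero, Matrix.cons_val_one, Matrix.head_cons,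
        Matrix.cons_val_two, Matrix.tail_cons, Matrix.of_apply, Matrix.cons_val',
        Matrix.empty_val', Matrix.cons_val_fin_one, Matrix.head_fin_const]
      have h1 : μ + σ = 1 := by linarith
      field_simp
      nlinarith [sq_nonneg (σ+δ), sq_nonneg (μ-δ)]
end

section
/- For a = μ−δ, b = σ+δ with a + b = 1 and a, b > 0, the stationary probabilities of states G₁ and G₃ under P are a²/(1−ab) and b²/(1−ab) respectively, and the G₃ probability exceeds the G₁ probability if and only if b > 1/2, i.e., σ + δ > 1/2. -/
/-- stationary probabilities of G₁ and G₃ and the crossing threshold b = 1/2. -/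
theorem stmt_8 (a b : ℝ) (hab : a + b = 1) (ha : 0 < a) (hb : 0 < b) :
    a^2 / (a^2 + a * b + b^2) = a^2 / (1 - a * b) ∧
    b^2 / (a^2 + a * b + b^2) = b^2 / (1 - a * b) ∧
    (b^2 / (1 - a * b) > a^2 / (1 - a * b) ↔ b > 1/2) := by
  have hd : a^2 + a * b + b^2 = 1 - a * b := by nlinarith [sq_nonneg (a+b)]
  have hpos : 0 < 1 - a * b := by nlinarith [sq_nonneg (a-b), sq_nonneg a, sq_nonneg b]
  refine ⟨by rw [hd], by rw [hd], ?_⟩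
  rw [gt_iff_lt, div_lt_div_iff_of_pos_right hpos]
  constructor
  · intro h; nlinarith
  · intro h; nlinarith
end

section
/- For the matrix P with rows (a, b, 0), (a, 0, b), (0, a, b), a + b = 1, a, b > 0, and its counterpart P′ with rows (a′, b′, 0), (a′, 0, b′), (0, a′, b′) where a′ = μ+δ, b′ = σ−δ, the difference between the G₃-components of their stationary distributions is b²/(1−ab) − b′²/(1−a′b′), which is strictly positive whenever δ > 0 (so that b > b′). -/
/-- cooperation-driven dynamics put strictly more stationary mass on G₃
than defection-driven dynamics whenever δ > 0. -/
theorem stmt_18 (σ μ δ : ℝ) (hsum : σ + μ = 1) (hδ0 : 0 < δ) (hδσ : δ < σ)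
    (hδμ : δ < μ) :
    let a : ℝ := μ - δ
    let b : ℝ := σ + δ
    let a' : ℝ := μ + δ
    let b' : ℝ := σ - δ
    0 < b^2 / (1 - a * b) - b'^2 / (1 - a' * b') := by
  intro a b a' b'
  have hb : (0:ℝ) < b := by simp only [b]; linarith
  have hb' : (0:ℝ) < b' := by simp only [b']; linarith
  have hbb : b' < b := by simp only [b, b']; linarith
  have hb1 : b < 1 := by simp only [b]; linarith
  have ha : a = 1 - b := by simp only [a, b]; linarith
  have ha' : a' = 1 - b' := by simp only [a', b']; linarith
  have hd1 : (0:ℝ) < 1 - a * b := by rw [ha]; nlinarith [sq_nonneg (2*b-1)]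
  have hd2 : (0:ℝ) < 1 - a' * b' := by rw [ha']; nlinarith [sq_nonneg (2*b'-1)]
  rw [sub_pos, div_lt_div_iff₀ hd2 hd1, ha, ha']
  have key : 0 < (b - b') * (b + b' - b * b') := by
    apply mul_pos (by linarith)
    nlinarith [mul_pos hb' (sub_pos.2 hb1)]
  nlinarith [key, mul_pos hb hb']
end
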